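/- arXiv:1709.08626 — 2 statements merged into one kernel-verified Lean document; each statement's English description precedes it below -/
import Mathlib

section
/- Let C be an M-copula (joint CDF of a random vector U on [0,1]^M with uniform marginals) and F₁,…,F_M univariate CDFs that are continuous and strictly increasing onto (0,1). Then F(x₁,…,x_M) := C(F₁(x₁),…,F_M(x_M)) is the joint CDF of the random vector (F₁⁻¹(U₁),…,F_M⁻¹(U_M)), and its marginals are F₁,…,F_M. -/
/-!
Since `Fᵢ` is a strictly increasing bijection onto `(0,1)` with inverse `Gᵢ`, for `u ∈ (0,1)` we
have `Gᵢ u ≤ x ↔ u ≤ Fᵢ x`. A uniform marginal has no atoms, so almost surely every `Uᵢ` lies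
in `(0,1)`, and the events `{Gᵢ(Uᵢ) ≤ xᵢ}` and `{Uᵢ ≤ Fᵢ(xᵢ)}` agree up to a null set; the joint
statement is then the definition of `C`, and the marginal one is uniformity of `Uᵢ`.
-/

open MeasureTheory Set Filter Topology

section UniformCDF

variable {Ω : Type*} [MeasurableSpace Ω] {μ : Measure Ω} {X : Ω → ℝ}

theorem measure_setOf_eq_eq_zero_of_uniform_cdf (hX : Measurable X)
    (hcdf : ∀ t ∈ Icc (0 : ℝ) 1, μ {ω | X ω ≤ t} = ENNReal.ofReal t)
    {t : ℝ} (ht : t ∈ Icc (0 : ℝ) 1) : μ {ω | X ω = t} = 0 := by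
  rcases ht.1.eq_or_lt with rfl | hpos
  · exact measure_mono_null (show {ω | X ω = 0} ⊆ {ω | X ω ≤ 0} from fun ω h => h.le)
      (by simpa using hcdf 0 ⟨le_rfl, zero_le_one⟩)
  have hbound : ∀ s ∈ Ioo 0 t, μ {ω | X ω = t} ≤ ENNReal.ofReal (t - s) := by
    intro s hs
    have hs₀₁ : s ∈ Icc (0 : ℝ) 1 := ⟨hs.1.le, hs.2.le.trans ht.2⟩
    calc μ {ω | X ω = t} ≤ μ ({ω | X ω ≤ t} \ {ω | X ω ≤ s}) :=
          measure_mono fun ω (h : X ω = t) => ⟨h.le, fun h' : X ω ≤ s => (h ▸ h').not_gt hs.2⟩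
      _ = ENNReal.ofReal (t - s) := by
        rw [measure_sdiff (show {ω | X ω ≤ s} ⊆ {ω | X ω ≤ t} from fun ω h => h.trans hs.2.le)
            (measurableSet_le hX measurable_const).nullMeasurableSet
            (by rw [hcdf s hs₀₁]; exact ENNReal.ofReal_ne_top),
          hcdf t ht, hcdf s hs₀₁, ENNReal.ofReal_sub _ hs.1.le]
  have hlim : Tendsto (fun s => ENNReal.ofReal (t - s)) (𝓝[<] t) (𝓝 0) := by
    have hcont : Continuous fun s => ENNReal.ofReal (t - s) :=
      ENNReal.continuous_ofReal.comp (continuous_sub_left t)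
    simpa using (hcont.tendsto t).mono_left nhdsWithin_le_nhds
  exact nonpos_iff_eq_zero.1 (ge_of_tendsto hlim (eventually_of_mem (Ioo_mem_nhdsLT hpos) hbound))

theorem ae_mem_Ioo_of_uniform_cdf (hX : Measurable X) (hrange : ∀ ω, X ω ∈ Icc (0 : ℝ) 1)
    (hcdf : ∀ t ∈ Icc (0 : ℝ) 1, μ {ω | X ω ≤ t} = ENNReal.ofReal t) :
    ∀ᵐ ω ∂μ, X ω ∈ Ioo (0 : ℝ) 1 := by
  have hatom (t : ℝ) (ht : t ∈ Icc (0 : ℝ) 1) : ∀ᵐ ω ∂μ, X ω ≠ t :=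
    ae_iff.2 (by simpa using measure_setOf_eq_eq_zero_of_uniform_cdf hX hcdf ht)
  filter_upwards [hatom 0 ⟨le_rfl, zero_le_one⟩, hatom 1 ⟨zero_le_one, le_rfl⟩] with ω h₀ h₁
  exact ⟨(hrange ω).1.lt_of_ne' h₀, (hrange ω).2.lt_of_ne h₁⟩

end UniformCDF

theorem sklar_converse_general
    {Ω : Type*} [MeasurableSpace Ω] (μ : Measure Ω)
    (M : ℕ) (U : Ω → Fin M → ℝ) (hUmeas : Measurable U)
    (hUrange : ∀ ω i, U ω i ∈ Set.Icc (0:ℝ) 1)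
    (hUunif : ∀ i, ∀ t ∈ Set.Icc (0:ℝ) 1, μ {ω | U ω i ≤ t} = ENNReal.ofReal t)
    (C : (Fin M → ℝ) → ℝ) (hC : ∀ u, C u = (μ {ω | ∀ i, U ω i ≤ u i}).toReal)
    (F : Fin M → ℝ → ℝ)
    (hFmono : ∀ i, StrictMono (F i))
    (hFrange : ∀ i, Set.range (F i) = Set.Ioo (0:ℝ) 1)
    (G : Fin M → ℝ → ℝ)
    (hFG : ∀ i, ∀ y ∈ Set.Ioo (0:ℝ) 1, F i (G i y) = y) :
    (∀ x : Fin M → ℝ,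
        (μ {ω | ∀ i, G i (U ω i) ≤ x i}).toReal = C (fun i => F i (x i))) ∧
    ∀ i, ∀ x : ℝ, (μ {ω | G i (U ω i) ≤ x}).toReal = F i x := by
  have hae : ∀ᵐ ω ∂μ, ∀ i, U ω i ∈ Ioo (0 : ℝ) 1 := ae_all_iff.2 fun i =>
    ae_mem_Ioo_of_uniform_cdf ((measurable_pi_apply i).comp hUmeas) (hUrange · i) (hUunif i)
  have hiff : ∀ᵐ ω ∂μ, ∀ i x, G i (U ω i) ≤ x ↔ U ω i ≤ F i x :=
    hae.mono fun ω h i x => by rw [← (hFmono i).le_iff_le, hFG i _ (h i)]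
  refine ⟨fun x => ?_, fun i x => ?_⟩
  · rw [hC]
    have hevent : {ω | ∀ i, G i (U ω i) ≤ x i} =ᵐ[μ] {ω | ∀ i, U ω i ≤ F i (x i)} :=
      hiff.mono fun ω h => propext (forall_congr' fun i => h i (x i))
    rw [measure_congr hevent]
  · obtain ⟨hpos, hlt⟩ : F i x ∈ Ioo (0 : ℝ) 1 := hFrange i ▸ mem_range_self x
    have hevent : {ω | G i (U ω i) ≤ x} =ᵐ[μ] {ω | U ω i ≤ F i x} :=
      hiff.mono fun ω h => propext (h i x)
    rw [measure_congr hevent, hUunif i _ ⟨hpos.le, hlt.le⟩,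
      ENNReal.toReal_ofReal hpos.le]

/-- Converse direction of Sklar's theorem for continuous strictly increasing marginals:
if `C` is the joint CDF of a vector `U` on `[0,1]^M` with uniform marginals (an
`M`-copula), and `F₁,…,F_M` are continuous strictly increasing CDFs onto `(0,1)` with
inverses `G₁,…,G_M`, then `F(x) := C(F₁(x₁),…,F_M(x_M))` is the joint CDF of
`(G₁(U₁),…,G_M(U_M))`, whose marginals are `F₁,…,F_M`. -/
theorem sklar_converse
    {Ω : Type*} [MeasurableSpace Ω] (μ : Measure Ω) [IsProbabilityMeasure μ]
    (M : ℕ) (U : Ω → Fin M → ℝ) (hUmeas : Measurable U)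
    (hUrange : ∀ ω i, U ω i ∈ Set.Icc (0:ℝ) 1)
    (hUunif : ∀ i, ∀ t ∈ Set.Icc (0:ℝ) 1, μ {ω | U ω i ≤ t} = ENNReal.ofReal t)
    (C : (Fin M → ℝ) → ℝ) (hC : ∀ u, C u = (μ {ω | ∀ i, U ω i ≤ u i}).toReal)
    (F : Fin M → ℝ → ℝ)
    (hFcont : ∀ i, Continuous (F i)) (hFmono : ∀ i, StrictMono (F i))
    (hFrange : ∀ i, Set.range (F i) = Set.Ioo (0:ℝ) 1)
    (G : Fin M → ℝ → ℝ)
    (hGF : ∀ i x, G i (F i x) = x)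
    (hFG : ∀ i, ∀ y ∈ Set.Ioo (0:ℝ) 1, F i (G i y) = y) :
    (∀ x : Fin M → ℝ,
        (μ {ω | ∀ i, G i (U ω i) ≤ x i}).toReal = C (fun i => F i (x i))) ∧
    ∀ i, ∀ x : ℝ, (μ {ω | G i (U ω i) ≤ x}).toReal = F i x :=
  sklar_converse_general μ M U hUmeas hUrange hUunif C hC F hFmono hFrange G hFG
end

section
/- If (Z₁,Z₂) is bivariate standard Gaussian with correlation ρ ∈ (−1,1), then the upper tail dependence coefficient lim_{u→1⁻} P(Z₁ > Φ⁻¹(u) | Z₂ > Φ⁻¹(u)) equals 0. -/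
/-!
The event `{Z₁ > t, Z₂ > t}` lies in `{V > c t}` for `V = (Z₁ + Z₂) / σ`, `σ = √(2 + 2ρ)` and
`c = 2 / σ`; here `c > 1` exactly because `ρ < 1`. Both `Z₂` and `V` are standard normal, so the
ratio is at most `Q(c t) / Q(t)`, `Q` the standard Gaussian tail. Substituting `y = c z` in the
tail integral gives `Q(c t) ≤ c e^{-(c² - 1) t² / 2} Q(t)`, so this bound tends to `0`, and
`Φ⁻¹(u) → ∞` as `u → 1⁻` because `Φ` is monotone and stays below `1`.
-/

open MeasureTheory ProbabilityTheory Filter Set Real Topology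

noncomputable def stdGaussianTail (x : ℝ) : ℝ := (gaussianReal 0 1).real (Ioi x)

lemma stdGaussianTail_eq_integral (x : ℝ) :
    stdGaussianTail x = ∫ y in Ioi x, gaussianPDFReal 0 1 y := by
  rw [stdGaussianTail, measureReal_def, gaussianReal_apply_eq_integral 0 one_ne_zero,
    ENNReal.toReal_ofReal (setIntegral_nonneg measurableSet_Ioi
      fun _ _ ↦ gaussianPDFReal_nonneg _ _ _)]

lemma stdGaussianTail_pos (x : ℝ) : 0 < stdGaussianTail x := by
  refine ENNReal.toReal_pos (fun h ↦ ?_) (measure_ne_top _ _)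
  simpa using gaussianReal_absolutelyContinuous' 0 one_ne_zero h

lemma cdf_stdGaussian_lt_one (x : ℝ) : cdf (gaussianReal 0 1) x < 1 := by
  rw [cdf_eq_real, ← compl_Ioi, probReal_compl_eq_one_sub measurableSet_Ioi]
  linarith [show 0 < (gaussianReal 0 1).real (Ioi x) from stdGaussianTail_pos x]

lemma gaussianPDFReal_std_mul (c x : ℝ) :
    gaussianPDFReal 0 1 (c * x) = exp (-(c ^ 2 - 1) * x ^ 2 / 2) * gaussianPDFReal 0 1 x := by
  simp only [gaussianPDFReal, sub_zero, NNReal.coe_one, mul_one]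
  rw [mul_left_comm, ← exp_add]
  ring_nf

lemma stdGaussianTail_mul_le {c t : ℝ} (hc : 1 ≤ c) (ht : 0 ≤ t) :
    stdGaussianTail (c * t) ≤ c * exp (-(c ^ 2 - 1) * t ^ 2 / 2) * stdGaussianTail t := by
  have hc₀ : 0 < c := by linarith
  have hdecay : ∀ y ∈ Ioi t, gaussianPDFReal 0 1 (c * y)
      ≤ exp (-(c ^ 2 - 1) * t ^ 2 / 2) * gaussianPDFReal 0 1 y := by
    intro y hy
    rw [gaussianPDFReal_std_mul]
    refine mul_le_mul_of_nonneg_right (exp_le_exp.2 ?_) (gaussianPDFReal_nonneg _ _ _)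
    have hty : t ^ 2 ≤ y ^ 2 := pow_le_pow_left₀ ht (le_of_lt hy) 2
    have hc2 : 0 ≤ c ^ 2 - 1 := by nlinarith
    nlinarith [mul_le_mul_of_nonneg_left hty hc2]
  calc stdGaussianTail (c * t)
      = c * ∫ y in Ioi t, gaussianPDFReal 0 1 (c * y) := by
        rw [stdGaussianTail_eq_integral, integral_comp_mul_left_Ioi _ _ hc₀, smul_eq_mul,
          mul_inv_cancel_left₀ hc₀.ne']
    _ ≤ c * ∫ y in Ioi t, exp (-(c ^ 2 - 1) * t ^ 2 / 2) * gaussianPDFReal 0 1 y := by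
        refine mul_le_mul_of_nonneg_left (setIntegral_mono_on ?_ ?_ measurableSet_Ioi hdecay) hc₀.le
        · exact ((integrable_gaussianPDFReal 0 1).comp_mul_left' hc₀.ne').integrableOn
        · exact ((integrable_gaussianPDFReal 0 1).const_mul _).integrableOn
    _ = c * exp (-(c ^ 2 - 1) * t ^ 2 / 2) * stdGaussianTail t := by
        rw [integral_const_mul, stdGaussianTail_eq_integral, mul_assoc]

lemma tendsto_stdGaussianTail_mul_div {c : ℝ} (hc : 1 < c) :
    Tendsto (fun t ↦ stdGaussianTail (c * t) / stdGaussianTail t) atTop (𝓝 0) := by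
  have hdecay : Tendsto (fun t : ℝ ↦ c * exp (-(c ^ 2 - 1) * t ^ 2 / 2)) atTop (𝓝 0) := by
    rw [← mul_zero c]
    refine (tendsto_exp_atBot.comp ?_).const_mul c
    exact ((tendsto_pow_atTop two_ne_zero).const_mul_atTop_of_neg (by nlinarith)).atBot_div_const
      two_pos
  refine squeeze_zero' (Eventually.of_forall fun t ↦
    div_nonneg (stdGaussianTail_pos _).le (stdGaussianTail_pos _).le) ?_ hdecay
  filter_upwards [eventually_ge_atTop 0] with t ht
  rw [div_le_iff₀ (stdGaussianTail_pos t)]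
  exact stdGaussianTail_mul_le hc.le ht

lemma Monotone.tendsto_rightInverse_nhdsLT_one {F Q : ℝ → ℝ} (hF : Monotone F)
    (hF_lt : ∀ x, F x < 1) (hFQ : ∀ u ∈ Ioo 0 1, F (Q u) = u) :
    Tendsto Q (𝓝[<] 1) atTop := by
  refine tendsto_atTop.2 fun M ↦ ?_
  have hM : max (F M) 0 < 1 := max_lt (hF_lt M) one_pos
  filter_upwards [Ioo_mem_nhdsLT hM] with u hu
  have hu₀ : u ∈ Ioo 0 1 := ⟨(le_max_right _ _).trans_lt hu.1, hu.2⟩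
  by_contra! hQu
  have := hF hQu.le
  rw [hFQ u hu₀] at this
  exact (le_max_left _ _).trans_lt hu.1 |>.not_ge this

section GaussianVectors

variable {Ω : Type*} [MeasurableSpace Ω] {μ : Measure Ω} {X Y : Ω → ℝ}

lemma measureReal_lt_of_map_eq_stdGaussian (hX : Measurable X)
    (hlaw : μ.map X = gaussianReal 0 1) (x : ℝ) :
    μ.real {ω | x < X ω} = stdGaussianTail x := by
  rw [stdGaussianTail, ← hlaw, map_measureReal_apply hX measurableSet_Ioi]
  rfl

lemma ProbabilityTheory.IndepFun.map_mul_add_mul_eq_gaussianReal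
    (hX : Measurable X) (hY : Measurable Y) (hXY : IndepFun X Y μ) {m₁ m₂ : ℝ} {v₁ v₂ : NNReal}
    (hXlaw : μ.map X = gaussianReal m₁ v₁) (hYlaw : μ.map Y = gaussianReal m₂ v₂) (a b : ℝ) :
    μ.map (fun ω ↦ a * X ω + b * Y ω) = gaussianReal (a * m₁ + b * m₂)
      (.mk (a ^ 2) (sq_nonneg a) * v₁ + .mk (b ^ 2) (sq_nonneg b) * v₂) := by
  have hlaw {Z : Ω → ℝ} {m : ℝ} {v : NNReal} (hZ : Measurable Z)
      (hZlaw : μ.map Z = gaussianReal m v) (c : ℝ) :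
      μ.map (fun ω ↦ c * Z ω) = gaussianReal (c * m) (.mk (c ^ 2) (sq_nonneg c) * v) := by
    rw [← gaussianReal_map_const_mul, ← hZlaw, Measure.map_map (measurable_const_mul c) hZ]
    rfl
  exact gaussianReal_add_gaussianReal_of_indepFun
    (hXY.comp (measurable_const_mul a) (measurable_const_mul b)) (hlaw hX hXlaw a) (hlaw hY hYlaw b)

lemma ProbabilityTheory.IndepFun.map_mul_add_mul_eq_stdGaussian
    (hX : Measurable X) (hY : Measurable Y) (hXY : IndepFun X Y μ)
    (hXlaw : μ.map X = gaussianReal 0 1) (hYlaw : μ.map Y = gaussianReal 0 1)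
    {a b : ℝ} (hab : a ^ 2 + b ^ 2 = 1) :
    μ.map (fun ω ↦ a * X ω + b * Y ω) = gaussianReal 0 1 := by
  rw [hXY.map_mul_add_mul_eq_gaussianReal hX hY hXlaw hYlaw]
  congr
  · simp
  · ext
    simp [hab]

end GaussianVectors

/-- Asymptotic tail independence of the Gaussian copula: if `(Z₁, Z₂)` is a centered
bivariate Gaussian vector with unit variances and correlation `ρ ∈ (-1,1)` (realised
as `Z₂ = ρZ₁ + √(1-ρ²)W` with `Z₁, W` independent standard normals), and `Φ⁻¹` is the
inverse of the standard normal CDF `Φ`, then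
`lim_{u→1⁻} P(Z₁ > Φ⁻¹(u) | Z₂ > Φ⁻¹(u)) = 0`. -/
theorem gaussian_copula_tail_independence
    {Ω : Type*} [MeasurableSpace Ω] (μ : Measure Ω) [IsProbabilityMeasure μ]
    (Z₁ W : Ω → ℝ) (hZ₁ : Measurable Z₁) (hW : Measurable W)
    (hZ₁law : Measure.map Z₁ μ = gaussianReal 0 1)
    (hWlaw : Measure.map W μ = gaussianReal 0 1)
    (hindep : IndepFun Z₁ W μ)
    (ρ : ℝ) (hρ : ρ ∈ Set.Ioo (-1:ℝ) 1)
    (Z₂ : Ω → ℝ) (hZ₂ : Z₂ = fun ω => ρ * Z₁ ω + Real.sqrt (1 - ρ^2) * W ω)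
    (Φ : ℝ → ℝ) (hΦ : ∀ x, Φ x = (gaussianReal 0 1 (Set.Iic x)).toReal)
    (Φinv : ℝ → ℝ) (hΦinv : ∀ u ∈ Set.Ioo (0:ℝ) 1, Φ (Φinv u) = u) :
    Tendsto
      (fun u : ℝ =>
        (μ {ω | Φinv u < Z₁ ω ∧ Φinv u < Z₂ ω}).toReal
          / (μ {ω | Φinv u < Z₂ ω}).toReal)
      (nhdsWithin 1 (Set.Iio 1)) (nhds 0) := by
  obtain ⟨hρ₁, hρ₂⟩ := hρ
  set s := √(1 - ρ ^ 2)
  set σ := √(2 + 2 * ρ)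
  have hs2 : s ^ 2 = 1 - ρ ^ 2 := sq_sqrt (by nlinarith)
  have hσ₀ : 0 < σ := sqrt_pos.2 (by linarith)
  have hσ2 : σ ^ 2 = 2 + 2 * ρ := sq_sqrt (by linarith)
  have hZ₂m : Measurable Z₂ := hZ₂ ▸ by fun_prop
  have hZ₂law : μ.map Z₂ = gaussianReal 0 1 :=
    hZ₂ ▸ hindep.map_mul_add_mul_eq_stdGaussian hZ₁ hW hZ₁law hWlaw (by rw [hs2]; ring)
  set V : Ω → ℝ := fun ω ↦ (1 + ρ) / σ * Z₁ ω + s / σ * W ω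
  have hVm : Measurable V := by fun_prop
  have hVlaw : μ.map V = gaussianReal 0 1 :=
    hindep.map_mul_add_mul_eq_stdGaussian hZ₁ hW hZ₁law hWlaw
      (by rw [div_pow, div_pow, hs2, hσ2, ← add_div, div_eq_one_iff_eq (by linarith)]; ring)
  have hV : ∀ ω, V ω = (Z₁ ω + Z₂ ω) / σ := fun ω ↦ by simp only [V, hZ₂]; ring
  have hc : 1 < 2 / σ := by rw [lt_div_iff₀ hσ₀]; nlinarith
  have hratio : ∀ t, (μ {ω | t < Z₁ ω ∧ t < Z₂ ω}).toReal / (μ {ω | t < Z₂ ω}).toReal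
      ≤ stdGaussianTail (2 / σ * t) / stdGaussianTail t := by
    intro t
    rw [← measureReal_def, ← measureReal_def, measureReal_lt_of_map_eq_stdGaussian hZ₂m hZ₂law,
      ← measureReal_lt_of_map_eq_stdGaussian hVm hVlaw (2 / σ * t)]
    refine div_le_div_of_nonneg_right (measureReal_mono ?_) (stdGaussianTail_pos t).le
    rintro ω ⟨h₁, h₂⟩
    rw [mem_ofPred_eq, hV, div_mul_eq_mul_div]
    exact div_lt_div_of_pos_right (by linarith) hσ₀
  have hΦcdf : Φ = cdf (gaussianReal 0 1) := funext fun x ↦ by rw [hΦ, cdf_eq_real]; rfl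
  have hΦinv_top : Tendsto Φinv (𝓝[<] 1) atTop :=
    (hΦcdf ▸ monotone_cdf _).tendsto_rightInverse_nhdsLT_one (hΦcdf ▸ cdf_stdGaussian_lt_one)
      hΦinv
  exact squeeze_zero (fun _ ↦ div_nonneg ENNReal.toReal_nonneg ENNReal.toReal_nonneg)
    (fun u ↦ hratio (Φinv u)) ((tendsto_stdGaussianTail_mul_div hc).comp hΦinv_top)
end
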